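/- Let X, Y be Bernoulli random variables with marginals p_x, p_y ∈ (0,1), all four joint probabilities positive, ε = P(X=1,Y=1) − p_x p_y, and C² = ε²/((p_x−p_x²)(p_y−p_y²)) the squared Pearson correlation. If |ε| ≤ (1/2)·min_{i,j} p(i)p(j), then |I(X,Y) − C²/2| ≤ K|ε|³ for a constant K depending only on the marginals. -/

import Mathlib

/-!
Write each cell of the table as `q = a + δ`, where `a` is the product of its two marginals.
For a 2 × 2 table every `δ` equals `±ε`, and the `δ` sum to zero. By the cubic Taylor bound for
`(1 + t) log (1 + t)` at `t = δ / a`, each summand of the mutual information is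
`q log (q / a) = δ + δ² / (2a) + r` with `|r| ≤ 4|ε|³ / a² ≤ 4|ε|³ / M²`. Summing over the four
cells, the linear terms cancel and the quadratic ones add up to `ε² Σ 1 / (2a) = C² / 2`.
-/

open Real Finset

theorem abs_log_one_add_sub_le {t : ℝ} (ht : |t| ≤ 1 / 2) :
    |log (1 + t) - (t - t ^ 2 / 2)| ≤ 2 * |t| ^ 3 := by
  have h := abs_log_sub_add_sum_range_le (x := -t) (by rw [abs_neg]; linarith) 2
  norm_num [sum_range_succ] at h
  calc |log (1 + t) - (t - t ^ 2 / 2)| = |-t + t ^ 2 / 2 + log (1 + t)| := by congr 1; ring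
    _ ≤ |t| ^ 3 / (1 - |t|) := h
    _ ≤ 2 * |t| ^ 3 := by
        rw [div_le_iff₀ (by linarith)]; nlinarith [pow_nonneg (abs_nonneg t) 3]

theorem abs_one_add_mul_log_one_add_sub_le {t : ℝ} (ht : |t| ≤ 1 / 2) :
    |(1 + t) * log (1 + t) - t - t ^ 2 / 2| ≤ 4 * |t| ^ 3 := by
  set e := log (1 + t) - (t - t ^ 2 / 2)
  have he : |e| ≤ 2 * |t| ^ 3 := abs_log_one_add_sub_le ht
  have h1t : |1 + t| ≤ 3 / 2 := by
    rcases abs_le.mp ht with ⟨h₁, h₂⟩; rw [abs_le]; constructor <;> linarith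
  calc |(1 + t) * log (1 + t) - t - t ^ 2 / 2| = |-(t ^ 3 / 2) + (1 + t) * e| := by
        congr 1; simp only [e]; ring
    _ ≤ |t| ^ 3 / 2 + 3 / 2 * (2 * |t| ^ 3) := by
        grw [abs_add_le, abs_neg, abs_mul, abs_div, abs_pow, h1t, he]
        norm_num
    _ ≤ 4 * |t| ^ 3 := by nlinarith [pow_nonneg (abs_nonneg t) 3]

theorem abs_mul_log_div_sub_le {q a : ℝ} (ha : 0 < a) (hq : |q - a| ≤ a / 2) :
    |q * log (q / a) - (q - a) - (q - a) ^ 2 / (2 * a)| ≤ 4 * |q - a| ^ 3 / a ^ 2 := by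
  set t := (q - a) / a
  have ht : |t| ≤ 1 / 2 := by
    rw [abs_div, abs_of_pos ha, div_le_iff₀ ha]; linarith
  have hq : q = a * (1 + t) := by simp only [t]; field_simp; ring
  calc |q * log (q / a) - (q - a) - (q - a) ^ 2 / (2 * a)|
      = a * |(1 + t) * log (1 + t) - t - t ^ 2 / 2| := by
        rw [← abs_of_pos ha, ← abs_mul, abs_of_pos ha, hq]
        congr 1; field_simp; ring
    _ ≤ a * (4 * |t| ^ 3) := by gcongr; exact abs_one_add_mul_log_one_add_sub_le ht
    _ = 4 * |q - a| ^ 3 / a ^ 2 := by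
        simp only [t]; rw [abs_div, abs_of_pos ha]; field_simp

theorem abs_sum_mul_log_div_sub_chiSq_le {ι : Type*} (s : Finset ι) (q a : ι → ℝ)
    (ha : ∀ i ∈ s, 0 < a i) (hq : ∀ i ∈ s, |q i - a i| ≤ a i / 2)
    (hsum : ∑ i ∈ s, q i = ∑ i ∈ s, a i) :
    |∑ i ∈ s, q i * log (q i / a i) - ∑ i ∈ s, (q i - a i) ^ 2 / (2 * a i)| ≤
      ∑ i ∈ s, 4 * |q i - a i| ^ 3 / a i ^ 2 := by
  have hdev : ∑ i ∈ s, (q i - a i) = 0 := by rw [sum_sub_distrib, hsum, sub_self]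
  calc _ = |∑ i ∈ s, (q i * log (q i / a i) - (q i - a i) - (q i - a i) ^ 2 / (2 * a i))| := by
        rw [sum_sub_distrib, sum_sub_distrib, hdev, sub_zero]
    _ ≤ _ := (abs_sum_le_sum_abs _ _).trans
        (sum_le_sum fun i hi => abs_mul_log_div_sub_le (ha i hi) (hq i hi))

theorem abs_sub_rowSum_mul_colSum_eq (p : Fin 2 → Fin 2 → ℝ) (hsum : ∑ i, ∑ j, p i j = 1)
    (i j : Fin 2) :
    |p i j - (∑ j', p i j') * (∑ i', p i' j)| = |p 1 1 - (∑ j', p 1 j') * (∑ i', p i' 1)| := by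
  have h00 : p 0 0 = 1 - p 0 1 - p 1 0 - p 1 1 := by
    simp only [Fin.sum_univ_two] at hsum; linarith
  fin_cases i <;> fin_cases j <;> simp only [Fin.zero_eta, Fin.mk_one, Fin.sum_univ_two, h00]
  · congr 1; ring
  · rw [← abs_neg]; congr 1; ring
  · rw [← abs_neg]; congr 1; ring

theorem eq_vecCons_one_sub_of_sum_eq_one {f : Fin 2 → ℝ} (hf : ∑ i, f i = 1) (i : Fin 2) :
    f i = ![1 - f 1, f 1] i := by
  rw [Fin.sum_univ_two] at hf
  fin_cases i
  · simp only [Fin.zero_eta, Matrix.cons_val_zero]; linarith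
  · rfl

theorem sum_div_two_mul_bernoulli_mul_bernoulli {x y : ℝ} (c : ℝ) (hx0 : x ≠ 0) (hx1 : x ≠ 1)
    (hy0 : y ≠ 0) (hy1 : y ≠ 1) :
    ∑ k : Fin 2 × Fin 2, c / (2 * (![1 - x, x] k.1 * ![1 - y, y] k.2)) =
      c / ((x - x ^ 2) * (y - y ^ 2)) / 2 := by
  have hx1' : 1 - x ≠ 0 := sub_ne_zero.2 hx1.symm
  have hy1' : 1 - y ≠ 0 := sub_ne_zero.2 hy1.symm
  simp only [Fintype.sum_prod_type, Fin.sum_univ_two, Matrix.cons_val_zero, Matrix.cons_val_one]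
  field_simp
  ring

theorem mutualInfo_sub_half_sq_corr_le_general (p : Fin 2 → Fin 2 → ℝ)
    (hsum : ∑ i, ∑ j, p i j = 1)
    (px py : ℝ) (hpx : px = ∑ j, p 1 j) (hpy : py = ∑ i, p i 1)
    (hpx0 : 0 < px) (hpx1 : px < 1) (hpy0 : 0 < py) (hpy1 : py < 1)
    (ε : ℝ) (hε : ε = p 1 1 - px * py)
    (C2 : ℝ) (hC2 : C2 = ε ^ 2 / ((px - px ^ 2) * (py - py ^ 2)))
    (M : ℝ)
    (hM : M = min (min ((∑ j, p 0 j) * (∑ i, p i 0)) ((∑ j, p 0 j) * py))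
      (min (px * (∑ i, p i 0)) (px * py)))
    (hsmall : |ε| ≤ M / 2) :
    |(∑ i, ∑ j, p i j * Real.log (p i j / ((∑ j', p i j') * (∑ i', p i' j)))) - C2 / 2| ≤
      (16 / M ^ 2) * |ε| ^ 3 := by
  set a : Fin 2 × Fin 2 → ℝ := fun k => (∑ j, p k.1 j) * (∑ i, p i k.2)
  have hrow : ∀ i, ∑ j, p i j = ![1 - px, px] i := by
    rw [hpx]; exact eq_vecCons_one_sub_of_sum_eq_one hsum
  have hcol : ∀ j, ∑ i, p i j = ![1 - py, py] j := by
    rw [hpy]; exact eq_vecCons_one_sub_of_sum_eq_one (sum_comm.trans hsum)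
  have hMa : ∀ k, M ≤ a k := by simp [a, hrow, hcol, hM, Prod.forall, Fin.forall_fin_two]
  have hM0 : 0 < M := by
    rw [hM, hrow, hcol]
    simp [hpx0, hpx1, hpy0, hpy1]
  have hdev : ∀ k, |p k.1 k.2 - a k| = |ε| := fun k => by
    rw [hε, hpx, hpy]; exact abs_sub_rowSum_mul_colSum_eq p hsum k.1 k.2
  have hchi : ∑ k, (p k.1 k.2 - a k) ^ 2 / (2 * a k) = C2 / 2 := by
    simp only [← sq_abs (p _ _ - _), hdev, sq_abs]
    simp only [a, hrow, hcol, hC2]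
    exact sum_div_two_mul_bernoulli_mul_bernoulli _ hpx0.ne' hpx1.ne hpy0.ne' hpy1.ne
  have htotal : ∑ k : Fin 2 × Fin 2, p k.1 k.2 = ∑ k, a k := by
    simp only [a, Fintype.sum_prod_type, ← sum_mul_sum, hsum]
    rw [sum_comm, hsum, mul_one]
  calc _ = |∑ k : Fin 2 × Fin 2, p k.1 k.2 * log (p k.1 k.2 / a k)
          - ∑ k, (p k.1 k.2 - a k) ^ 2 / (2 * a k)| := by
        rw [hchi, Fintype.sum_prod_type]
    _ ≤ ∑ k, 4 * |p k.1 k.2 - a k| ^ 3 / a k ^ 2 :=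
        abs_sum_mul_log_div_sub_chiSq_le univ (fun k => p k.1 k.2) a
          (fun k _ => hM0.trans_le (hMa k)) (fun k _ => by rw [hdev]; linarith [hMa k]) htotal
    _ ≤ ∑ _k : Fin 2 × Fin 2, 4 * |ε| ^ 3 / M ^ 2 := by
        refine sum_le_sum fun k _ => ?_
        rw [hdev]; gcongr; exact hMa k
    _ = 16 / M ^ 2 * |ε| ^ 3 := by simp; ring

/-- restatement of Theorem 1 in terms of the squared Pearson correlation
C² = ε²/((p_x−p_x²)(p_y−p_y²)): |I(X,Y) − C²/2| ≤ K|ε|³ with the constant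
K = 16 / (min_{i,j} p_X(i) p_Y(j))² depending only on the marginals. -/
theorem mutualInfo_sub_half_sq_corr_le (p : Fin 2 → Fin 2 → ℝ)
    (hpos : ∀ i j, 0 < p i j) (hsum : ∑ i, ∑ j, p i j = 1)
    (px py : ℝ) (hpx : px = ∑ j, p 1 j) (hpy : py = ∑ i, p i 1)
    (hpx0 : 0 < px) (hpx1 : px < 1) (hpy0 : 0 < py) (hpy1 : py < 1)
    (ε : ℝ) (hε : ε = p 1 1 - px * py)
    (C2 : ℝ) (hC2 : C2 = ε ^ 2 / ((px - px ^ 2) * (py - py ^ 2)))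
    (M : ℝ)
    (hM : M = min (min ((∑ j, p 0 j) * (∑ i, p i 0)) ((∑ j, p 0 j) * py))
      (min (px * (∑ i, p i 0)) (px * py)))
    (hsmall : |ε| ≤ M / 2) :
    |(∑ i, ∑ j, p i j * Real.log (p i j / ((∑ j', p i j') * (∑ i', p i' j)))) - C2 / 2| ≤
      (16 / M ^ 2) * |ε| ^ 3 :=
  mutualInfo_sub_half_sq_corr_le_general p hsum px py hpx hpy hpx0 hpx1 hpy0 hpy1 ε hε C2 hC2 M hM
    hsmall
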